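/- Let $2 \le u \le q \le \infty$, $m < p \le \infty$ with $p > mu$, and set $\frac{1}{\rho} = \frac{1}{u} - \frac{m}{p}$. There exists $C>0$ such that every continuous $m$-homogeneous polynomial $P : \ell_p \to \ell_u$ with coefficients $(c_\alpha(P))_{\alpha \in \Lambda_m}$ satisfies $\big(\sum_{\alpha \in \Lambda_m} \|c_\alpha(P)\|_{\ell_q}^\rho\big)^{1/\rho} \le C\|P\|$. -/

import Mathlib

open scoped ENNReal Classical

/-- The natural inclusion `ℓ_u ⊆ ℓ_q` for `u ≤ q`. -/
def inclLp {u q : ℝ≥0∞} (h : u ≤ q) (a : lp (fun _ : ℕ => ℂ) u) : lp (fun _ : ℕ => ℂ) q :=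
  ⟨a, lp.monotone h a.property⟩

noncomputable def sgn (b : Bool) : ℂ := if b then 1 else -1

lemma sgn_norm (b : Bool) : ‖sgn b‖ = 1 := by cases b <;> simp [sgn]

lemma sgn_conj (b : Bool) : (starRingEnd ℂ) (sgn b) = sgn b := by cases b <;> simp [sgn]

lemma sum_sgn_pow (e : ℕ) : ∑ v : Bool, sgn v ^ e = if Even e then 2 else 0 := by
  rcases Nat.even_or_odd e with he | he
  · simp [Fintype.sum_bool, sgn, he.neg_one_pow, if_pos he]
  · simp [Fintype.sum_bool, sgn, he.neg_one_pow, if_neg (Nat.not_even_iff_odd.2 he)]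

lemma sum_prod_sgn_pow {X : Type*} [Fintype X] [DecidableEq X] (e : X → ℕ) :
    ∑ δ : X → Bool, ∏ x, sgn (δ x) ^ e x = ∏ x, ∑ v : Bool, sgn v ^ e x :=
  (Fintype.prod_sum fun x v => sgn v ^ e x).symm

lemma prod_sgn_eq {m : ℕ} {X : Type*} [Fintype X] [DecidableEq X]
    (g : Fin m → X) (ε : Fin m × X → Bool) :
    ∏ k, sgn (ε (k, g k)) = ∏ x : Fin m × X, sgn (ε x) ^ (if g x.1 = x.2 then 1 else 0) := by
  rw [Fintype.prod_prod_type]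
  refine Finset.prod_congr rfl fun k _ => ?_
  rw [show (∏ b : X, sgn (ε (k, b)) ^ (if g k = b then 1 else 0))
      = ∏ b : X, (if g k = b then sgn (ε (k, b)) else 1) from
    Finset.prod_congr rfl fun b _ => pow_boole _ _]
  simp

lemma sgn_orth {m : ℕ} {X : Type*} [Fintype X] [DecidableEq X] (g g' : Fin m → X) :
    ∑ ε : Fin m × X → Bool, (∏ k, sgn (ε (k, g k))) * (∏ k, sgn (ε (k, g' k)))
      = if g = g' then (2 : ℂ) ^ (m * Fintype.card X) else 0 := by
  have key : ∀ ε : Fin m × X → Bool,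
      (∏ k, sgn (ε (k, g k))) * (∏ k, sgn (ε (k, g' k)))
        = ∏ x : Fin m × X, sgn (ε x) ^
            ((if g x.1 = x.2 then 1 else 0) + (if g' x.1 = x.2 then 1 else 0)) := by
    intro ε
    rw [prod_sgn_eq g ε, prod_sgn_eq g' ε, ← Finset.prod_mul_distrib]
    exact Finset.prod_congr rfl fun x _ => (pow_add _ _ _).symm
  simp only [key]
  rw [sum_prod_sgn_pow]
  by_cases h : g = g'
  · subst h
    have : ∀ x : Fin m × X, (∑ v : Bool, sgn v ^
        ((if g x.1 = x.2 then 1 else 0) + (if g x.1 = x.2 then 1 else 0))) = 2 := by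
      intro x
      rw [sum_sgn_pow]
      by_cases hx : g x.1 = x.2 <;> simp [hx]
    rw [Finset.prod_congr rfl fun x _ => this x, if_pos rfl, Finset.prod_const]
    simp [Fintype.card_prod]
  · obtain ⟨k, hk⟩ : ∃ k, g k ≠ g' k := by
      by_contra hc
      push_neg at hc
      exact h (funext hc)
    rw [if_neg h]
    refine Finset.prod_eq_zero (Finset.mem_univ (k, g k)) ?_
    rw [sum_sgn_pow, if_neg]
    simp [hk.symm, Nat.even_add_one]

lemma rademacher_norm_sq {m : ℕ} {X : Type*} [Fintype X] [DecidableEq X]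
    (b : (Fin m → X) → ℂ) :
    (2 : ℝ) ^ (m * Fintype.card X) * ∑ g : Fin m → X, ‖b g‖ ^ 2
      = ∑ ε : Fin m × X → Bool, ‖∑ g : Fin m → X, (∏ k, sgn (ε (k, g k))) * b g‖ ^ 2 := by
  have conj_prod : ∀ (ε : Fin m × X → Bool) (g : Fin m → X),
      (starRingEnd ℂ) (∏ k, sgn (ε (k, g k))) = ∏ k, sgn (ε (k, g k)) := by
    intro ε g
    rw [map_prod]
    exact Finset.prod_congr rfl fun k _ => sgn_conj _
  have main : ∑ ε : Fin m × X → Bool,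
      (∑ g : Fin m → X, (∏ k, sgn (ε (k, g k))) * b g) *
        (starRingEnd ℂ) (∑ g : Fin m → X, (∏ k, sgn (ε (k, g k))) * b g)
      = (2 : ℂ) ^ (m * Fintype.card X) * ∑ g : Fin m → X, b g * (starRingEnd ℂ) (b g) := by
    have expand : ∀ ε : Fin m × X → Bool,
        (∑ g : Fin m → X, (∏ k, sgn (ε (k, g k))) * b g) *
          (starRingEnd ℂ) (∑ g : Fin m → X, (∏ k, sgn (ε (k, g k))) * b g)
        = ∑ g : Fin m → X, ∑ g' : Fin m → X,
            ((∏ k, sgn (ε (k, g k))) * (∏ k, sgn (ε (k, g' k)))) *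
              (b g * (starRingEnd ℂ) (b g')) := by
      intro ε
      rw [map_sum, Finset.sum_mul_sum]
      refine Finset.sum_congr rfl fun g _ => Finset.sum_congr rfl fun g' _ => ?_
      rw [map_mul, conj_prod]
      ring
    simp only [expand]
    rw [Finset.sum_comm]
    have swap2 : ∀ g : Fin m → X,
        ∑ ε : Fin m × X → Bool, ∑ g' : Fin m → X,
            ((∏ k, sgn (ε (k, g k))) * (∏ k, sgn (ε (k, g' k)))) *
              (b g * (starRingEnd ℂ) (b g'))
        = ∑ g' : Fin m → X, (if g = g' then (2 : ℂ) ^ (m * Fintype.card X) else 0) *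
              (b g * (starRingEnd ℂ) (b g')) := by
      intro g
      rw [Finset.sum_comm]
      refine Finset.sum_congr rfl fun g' _ => ?_
      rw [← Finset.sum_mul, sgn_orth]
    rw [Finset.sum_congr rfl fun g _ => swap2 g]
    rw [Finset.mul_sum]
    refine Finset.sum_congr rfl fun g _ => ?_
    simp
  have cast_eq : ∀ z : ℂ, z * (starRingEnd ℂ) z = ((‖z‖ ^ 2 : ℝ) : ℂ) := by
    intro z
    rw [Complex.mul_conj]
    norm_cast
    rw [Complex.normSq_eq_norm_sq]
  simp only [cast_eq] at main
  exact_mod_cast main.symm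

lemma sum_rpow_le_rpow_sum {ι : Type*} (s : Finset ι) (f : ι → ℝ) (hf : ∀ i ∈ s, 0 ≤ f i)
    {t : ℝ} (ht : 1 ≤ t) : ∑ i ∈ s, f i ^ t ≤ (∑ i ∈ s, f i) ^ t := by
  have ht0 : 0 < t := lt_of_lt_of_le one_pos ht
  set S := ∑ i ∈ s, f i with hS
  have hS0 : 0 ≤ S := Finset.sum_nonneg hf
  rcases eq_or_lt_of_le hS0 with h0 | hpos
  · have : ∀ i ∈ s, f i = 0 := by
      intro i hi
      exact le_antisymm ((Finset.single_le_sum hf hi).trans h0.symm.le) (hf i hi)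
    rw [Finset.sum_congr rfl fun i hi => by rw [this i hi, Real.zero_rpow ht0.ne']]
    simp [← h0, Real.zero_rpow ht0.ne']
  · have step : ∀ i ∈ s, f i ^ t ≤ S ^ (t - 1) * f i := by
      intro i hi
      rcases eq_or_lt_of_le (hf i hi) with h0 | hfi
      · rw [← h0, Real.zero_rpow ht0.ne']
        positivity
      · have : f i ^ t = f i ^ (t - 1) * f i := by
          rw [← Real.rpow_add_one hfi.ne' (t - 1)]
          ring_nf
        rw [this]
        have hle : f i ≤ S := Finset.single_le_sum hf hi
        exact mul_le_mul_of_nonneg_right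
          (Real.rpow_le_rpow (hf i hi) hle (by linarith)) (hf i hi)
    calc ∑ i ∈ s, f i ^ t ≤ ∑ i ∈ s, S ^ (t - 1) * f i := Finset.sum_le_sum step
      _ = S ^ (t - 1) * S := by rw [← Finset.mul_sum]
      _ = S ^ t := by rw [← Real.rpow_add_one hpos.ne']; ring_nf

section polarization
variable {E F : Type*} [NormedAddCommGroup E] [NormedSpace ℂ E]
  [NormedAddCommGroup F] [NormedSpace ℂ F]

lemma polarization (m : ℕ) (T : ContinuousMultilinearMap ℂ (fun _ : Fin m => E) F)
    (hT : ∀ (σ : Equiv.Perm (Fin m)) (x : Fin m → E), T (fun j => x (σ j)) = T x)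
    (x : Fin m → E) :
    ((2 : ℝ) ^ m * m.factorial) * ‖T x‖
      ≤ ∑ δ : Fin m → Bool, ‖T (fun _ => ∑ k, sgn (δ k) • x k)‖ := by
  classical
  -- expansion of each term
  have expand : ∀ δ : Fin m → Bool,
      T (fun _ => ∑ k, sgn (δ k) • x k)
        = ∑ h : Fin m → Fin m, (∏ j, sgn (δ (h j))) • T (fun j => x (h j)) := by
    intro δ
    rw [T.map_sum (fun _ k => sgn (δ k) • x k)]
    exact Finset.sum_congr rfl fun h _ => by rw [← T.map_smul_univ]
  -- the key identity
  have iden : ∑ δ : Fin m → Bool, (∏ k, sgn (δ k)) • T (fun _ => ∑ k, sgn (δ k) • x k)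
      = (((2 : ℕ) ^ m * m.factorial : ℕ) : ℂ) • T x := by
    simp only [expand, Finset.smul_sum]
    rw [Finset.sum_comm]
    have coefeq : ∀ h : Fin m → Fin m,
        ∑ δ : Fin m → Bool, (∏ k, sgn (δ k)) • ((∏ j, sgn (δ (h j))) • T (fun j => x (h j)))
          = (∑ δ : Fin m → Bool, ∏ k, sgn (δ k) ^
              (1 + (Finset.univ.filter fun j => h j = k).card)) • T (fun j => x (h j)) := by
      intro h
      rw [Finset.sum_smul]
      refine Finset.sum_congr rfl fun δ _ => ?_
      rw [smul_smul]
      congr 1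
      have : (∏ j, sgn (δ (h j)))
          = ∏ k, sgn (δ k) ^ (Finset.univ.filter fun j => h j = k).card := by
        rw [← Finset.prod_fiberwise Finset.univ h (fun j => sgn (δ (h j)))]
        refine Finset.prod_congr rfl fun k _ => ?_
        rw [Finset.prod_congr rfl fun j hj => by
            rw [show h j = k from (Finset.mem_filter.1 hj).2], Finset.prod_const]
      rw [this, ← Finset.prod_mul_distrib]
      exact Finset.prod_congr rfl fun k _ => by rw [pow_add, pow_one]
    rw [Finset.sum_congr rfl fun h _ => coefeq h]
    -- compute the coefficient
    have coefval : ∀ h : Fin m → Fin m,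
        (∑ δ : Fin m → Bool, ∏ k, sgn (δ k) ^
            (1 + (Finset.univ.filter fun j => h j = k).card))
          = if Function.Bijective h then (2 : ℂ) ^ m else 0 := by
      intro h
      rw [sum_prod_sgn_pow]
      by_cases hb : Function.Bijective h
      · rw [if_pos hb]
        have hcard : ∀ k, (Finset.univ.filter fun j => h j = k).card = 1 := by
          intro k
          rw [Finset.card_eq_one]
          obtain ⟨j, hj⟩ := hb.2 k
          exact ⟨j, by
            ext j'
            simp only [Finset.mem_filter, Finset.mem_univ, true_and, Finset.mem_singleton]
            constructor
            · intro hj'; exact hb.1 (hj'.trans hj.symm)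
            · rintro rfl; exact hj⟩
        have : ∀ k : Fin m, (∑ v : Bool, sgn v ^
            (1 + (Finset.univ.filter fun j => h j = k).card)) = 2 := by
          intro k; rw [hcard k, sum_sgn_pow, if_pos (by decide)]
        rw [Finset.prod_congr rfl fun k _ => this k, Finset.prod_const]
        simp
      · rw [if_neg hb]
        have hns : ¬ Function.Surjective h := by
          intro hs
          exact hb ⟨Finite.injective_iff_surjective.2 hs, hs⟩
        rw [Function.Surjective] at hns
        push_neg at hns
        obtain ⟨k, hk⟩ := hns
        refine Finset.prod_eq_zero (Finset.mem_univ k) ?_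
        have : (Finset.univ.filter fun j => h j = k).card = 0 := by
          rw [Finset.card_eq_zero]
          ext j; simp only [Finset.mem_filter, Finset.mem_univ, true_and,
            Finset.notMem_empty, iff_false]
          exact hk j
        rw [this, sum_sgn_pow, if_neg (by decide)]
    rw [Finset.sum_congr rfl fun h _ => by rw [coefval h]]
    -- sum over bijective h
    have perm_eq : ∀ h : Fin m → Fin m, Function.Bijective h →
        T (fun j => x (h j)) = T x := by
      intro h hb
      have := hT (Equiv.ofBijective h hb) x
      simpa using this
    rw [← Finset.sum_filter_add_sum_filter_not Finset.univ (fun h => Function.Bijective h)]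
    have zero2 : ∑ h ∈ Finset.univ.filter (fun h : Fin m → Fin m => ¬ Function.Bijective h),
        (if Function.Bijective h then (2 : ℂ) ^ m else 0) • T (fun j => x (h j)) = 0 := by
      refine Finset.sum_eq_zero fun h hh => ?_
      rw [if_neg (Finset.mem_filter.1 hh).2, zero_smul]
    rw [zero2, add_zero]
    have main2 : ∑ h ∈ Finset.univ.filter (fun h : Fin m → Fin m => Function.Bijective h),
        (if Function.Bijective h then (2 : ℂ) ^ m else 0) • T (fun j => x (h j))
        = (Finset.univ.filter (fun h : Fin m → Fin m => Function.Bijective h)).card •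
            ((2 : ℂ) ^ m • T x) := by
      rw [Finset.sum_congr rfl fun h hh => by
        rw [if_pos (Finset.mem_filter.1 hh).2, perm_eq h (Finset.mem_filter.1 hh).2]]
      rw [Finset.sum_const]
    rw [main2]
    have hcard : (Finset.univ.filter (fun h : Fin m → Fin m => Function.Bijective h)).card
        = m.factorial := by
      rw [← Fintype.card_subtype]
      rw [Fintype.card_congr
        (⟨fun h => Equiv.ofBijective h.1 h.2, fun σ => ⟨σ, σ.bijective⟩,
          fun h => Subtype.ext rfl, fun σ => Equiv.ext fun a => rfl⟩ :
            {h : Fin m → Fin m // Function.Bijective h} ≃ Equiv.Perm (Fin m))]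
      rw [Fintype.card_perm, Fintype.card_fin]
    rw [hcard, ← Nat.cast_smul_eq_nsmul ℂ, smul_smul]
    congr 1
    push_cast
    ring
  -- norms
  have norm_le : ‖(((2 : ℕ) ^ m * m.factorial : ℕ) : ℂ) • T x‖
      ≤ ∑ δ : Fin m → Bool, ‖T (fun _ => ∑ k, sgn (δ k) • x k)‖ := by
    rw [← iden]
    refine (norm_sum_le _ _).trans (Finset.sum_le_sum fun δ _ => ?_)
    rw [norm_smul]
    have : ‖∏ k, sgn (δ k)‖ = 1 := by
      rw [norm_prod]
      rw [Finset.prod_congr rfl fun k _ => sgn_norm (δ k)]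
      simp
    rw [this, one_mul]
  calc ((2 : ℝ) ^ m * m.factorial) * ‖T x‖
      = ‖(((2 : ℕ) ^ m * m.factorial : ℕ) : ℂ) • T x‖ := by
        rw [norm_smul]
        congr 1
        rw [Complex.norm_natCast]
        push_cast; ring
    _ ≤ _ := norm_le

lemma weights_lemma {m : ℕ} (hm : 0 < m) {ι : Type*} [Fintype ι]
    (a : (Fin m → ι) → ℝ) (ha : ∀ g, 0 ≤ a g)
    (hsym : ∀ (σ : Equiv.Perm (Fin m)) (g : Fin m → ι), a (fun j => g (σ j)) = a g)
    (ur pr A : ℝ) (hur : 0 < ur) (hpr : 0 < pr) (hA : 0 ≤ A)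
    (ρ : ℝ) (hρ : 1 / ρ = 1 / ur - m / pr) (hρur : ur < ρ)
    (H : ∀ lam : ι → ℝ, (∀ i, 0 ≤ lam i) → ∑ i, lam i ^ pr ≤ 1 →
      ∑ g : Fin m → ι, (∏ k, lam (g k)) ^ ur * a g ^ ur ≤ A ^ ur) :
    ∑ g : Fin m → ι, a g ^ ρ ≤ A ^ ρ := by
  classical
  have hρ0 : 0 < ρ := lt_trans hur hρur
  have hAρ : 0 ≤ A ^ ρ := Real.rpow_nonneg hA _
  set S := ∑ g : Fin m → ι, a g ^ ρ with hSdef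
  have hS0 : 0 ≤ S := Finset.sum_nonneg fun g _ => Real.rpow_nonneg (ha g) _
  rcases eq_or_lt_of_le hS0 with h0 | hSpos
  · rw [← h0]; exact hAρ
  have hmR : (0:ℝ) < m := by exact_mod_cast hm
  -- linear relation between the exponents
  have L : ur * pr = ρ * pr - ρ * (m * ur) := by
    have h1 : 1 / ρ = (pr - m * ur) / (ur * pr) := by
      rw [hρ]; field_simp
    rw [div_eq_div_iff hρ0.ne' (by positivity : ur * pr ≠ 0)] at h1
    linarith
  have hβ : (ρ - ur) / (m * ρ) = ur / pr := by
    rw [div_eq_div_iff (by positivity : (↑m * ρ) ≠ 0) hpr.ne']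
    linarith
  set β := (ρ - ur) / (m * ρ) with hβdef
  have hβ0 : 0 ≤ β := div_nonneg (by linarith) (by positivity)
  set zero : Fin m := ⟨0, hm⟩
  set t : ι → ℝ := fun i =>
    (∑ g ∈ Finset.univ.filter (fun g : Fin m → ι => g zero = i), a g ^ ρ) / S with htdef
  have ht0 : ∀ i, 0 ≤ t i := fun i =>
    div_nonneg (Finset.sum_nonneg fun g _ => Real.rpow_nonneg (ha g) _) hS0
  have htsum : ∑ i, t i = 1 := by
    rw [← Finset.sum_div,
      Finset.sum_fiberwise Finset.univ (fun g : Fin m → ι => g zero) (fun g => a g ^ ρ)]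
    exact div_self hSpos.ne'
  set lam : ι → ℝ := fun i => t i ^ (1 / pr) with hlamdef
  have hlam0 : ∀ i, 0 ≤ lam i := fun i => Real.rpow_nonneg (ht0 i) _
  have hlamt : ∀ i, lam i ^ pr = t i := by
    intro i
    rw [hlamdef, ← Real.rpow_mul (ht0 i), one_div_mul_cancel hpr.ne', Real.rpow_one]
  have hlampr : ∑ i, lam i ^ pr ≤ 1 := by
    rw [Finset.sum_congr rfl fun i _ => hlamt i, htsum]
  -- the key pointwise bound
  have key : ∀ (g : Fin m → ι) (k : Fin m), a g ^ ρ ≤ S * t (g k) := by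
    intro g k
    have hg' : a (fun j => g (Equiv.swap zero k j)) = a g := hsym _ g
    have hmem : (fun j => g (Equiv.swap zero k j)) ∈
        Finset.univ.filter (fun h : Fin m → ι => h zero = g k) := by
      simp [Equiv.swap_apply_left]
    have h1 : a g ^ ρ ≤ ∑ h ∈ Finset.univ.filter (fun h : Fin m → ι => h zero = g k),
        a h ^ ρ := by
      rw [← hg']
      exact Finset.single_le_sum (fun h _ => Real.rpow_nonneg (ha h) _) hmem
    have h2 : S * t (g k) = ∑ h ∈ Finset.univ.filter (fun h : Fin m → ι => h zero = g k),
        a h ^ ρ := by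
      rw [htdef]
      field_simp
    linarith
  have pointwise : ∀ g : Fin m → ι,
      a g ^ ρ ≤ S ^ (β * m) * ((∏ k, lam (g k)) ^ ur * a g ^ ur) := by
    intro g
    have hrhs0 : 0 ≤ S ^ (β * m) * ((∏ k, lam (g k)) ^ ur * a g ^ ur) := by
      apply mul_nonneg (Real.rpow_nonneg hS0 _)
      apply mul_nonneg (Real.rpow_nonneg (Finset.prod_nonneg fun k _ => hlam0 _) _)
        (Real.rpow_nonneg (ha g) _)
    rcases eq_or_lt_of_le (ha g) with hag | hag
    · have hz : a g ^ ρ = 0 := by rw [← hag, Real.zero_rpow hρ0.ne']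
      rw [hz]
      exact hrhs0
    have e1 : a g ^ ρ = a g ^ ur * a g ^ (ρ - ur) := by
      rw [← Real.rpow_add hag]; ring_nf
    have e2 : a g ^ (ρ - ur) = ∏ _k : Fin m, (a g ^ ρ) ^ β := by
      rw [Finset.prod_const, Finset.card_univ, Fintype.card_fin,
        ← Real.rpow_natCast ((a g ^ ρ) ^ β) m, ← Real.rpow_mul (Real.rpow_nonneg hag.le _),
        ← Real.rpow_mul hag.le]
      congr 1
      rw [hβdef]
      field_simp
    have e3 : ∏ _k : Fin m, (a g ^ ρ) ^ β ≤ ∏ k, (S * t (g k)) ^ β :=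
      Finset.prod_le_prod (fun k _ => Real.rpow_nonneg (Real.rpow_nonneg hag.le _) _)
        (fun k _ => Real.rpow_le_rpow (Real.rpow_nonneg hag.le _) (key g k) hβ0)
    have e4 : ∏ k, (S * t (g k)) ^ β = S ^ (β * m) * ∏ k, lam (g k) ^ ur := by
      rw [Finset.prod_congr rfl fun k _ => Real.mul_rpow hS0 (ht0 (g k)),
        Finset.prod_mul_distrib, Finset.prod_const, Finset.card_univ, Fintype.card_fin,
        ← Real.rpow_natCast (S ^ β) m, ← Real.rpow_mul hS0]
      congr 1
      refine Finset.prod_congr rfl fun k _ => ?_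
      rw [hβ, hlamdef, ← Real.rpow_mul (ht0 (g k))]
      congr 1
      field_simp
    have e5 : ∏ k, lam (g k) ^ ur = (∏ k, lam (g k)) ^ ur :=
      Real.finset_prod_rpow Finset.univ _ (fun k _ => hlam0 _) ur
    calc a g ^ ρ = a g ^ ur * a g ^ (ρ - ur) := e1
      _ ≤ a g ^ ur * (S ^ (β * m) * ∏ k, lam (g k) ^ ur) := by
          rw [e2]
          refine mul_le_mul_of_nonneg_left ?_ (Real.rpow_nonneg hag.le _)
          rw [← e4]; exact e3
      _ = S ^ (β * m) * ((∏ k, lam (g k)) ^ ur * a g ^ ur) := by rw [e5]; ring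
  have hSle : S ≤ S ^ (β * m) * A ^ ur := by
    calc S ≤ ∑ g : Fin m → ι, S ^ (β * m) * ((∏ k, lam (g k)) ^ ur * a g ^ ur) :=
        Finset.sum_le_sum fun g _ => pointwise g
      _ = S ^ (β * m) * ∑ g : Fin m → ι, (∏ k, lam (g k)) ^ ur * a g ^ ur := by
          rw [Finset.mul_sum]
      _ ≤ S ^ (β * m) * A ^ ur :=
          mul_le_mul_of_nonneg_left (H lam hlam0 hlampr) (Real.rpow_nonneg hS0 _)
  have hexp : β * m = 1 - ur / ρ := by
    rw [hβdef]
    field_simp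
  have hS2 : S ^ (ur / ρ) ≤ A ^ ur := by
    have hsplit : S = S ^ (β * m) * S ^ (ur / ρ) := by
      rw [← Real.rpow_add hSpos, hexp]
      ring_nf
      rw [Real.rpow_one]
    have hpos : 0 < S ^ (β * m) := Real.rpow_pos_of_pos hSpos _
    nlinarith [hSle, hsplit, Real.rpow_nonneg hS0 (ur / ρ)]
  calc S = (S ^ (ur / ρ)) ^ (ρ / ur) := by
        rw [← Real.rpow_mul hS0, show ur / ρ * (ρ / ur) = 1 from by field_simp, Real.rpow_one]
      _ ≤ (A ^ ur) ^ (ρ / ur) := Real.rpow_le_rpow (Real.rpow_nonneg hS0 _) hS2 (by positivity)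
      _ = A ^ ρ := by
        rw [← Real.rpow_mul hA]
        congr 1
        field_simp

lemma inclLp_apply {u q : ℝ≥0∞} (h : u ≤ q) (a : lp (fun _ : ℕ => ℂ) u) (j : ℕ) :
    (inclLp h a : ℕ → ℂ) j = a j := rfl

lemma norm_inclLp_le {u q : ℝ≥0∞} [Fact (1 ≤ u)] [Fact (1 ≤ q)] (huq : u ≤ q) (hu : u ≠ ∞)
    (x : lp (fun _ : ℕ => ℂ) u) : ‖inclLp huq x‖ ≤ ‖x‖ := by
  have hu1 : 1 ≤ u := Fact.out
  have hu0 : u ≠ 0 := by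
    intro h; rw [h] at hu1; simp at hu1
  have hur : 0 < u.toReal := ENNReal.toReal_pos hu0 hu
  -- first, for norm ≤ 1
  have claim : ∀ y : lp (fun _ : ℕ => ℂ) u, ‖y‖ ≤ 1 → ‖inclLp huq y‖ ≤ 1 := by
    intro y hy
    have hyj : ∀ j, ‖y j‖ ≤ 1 := fun j => (lp.norm_apply_le_norm hu0 y j).trans hy
    by_cases hq : q = ∞
    · subst hq
      rw [lp.norm_eq_ciSup]
      exact ciSup_le fun j => hyj j
    · have hqr : 0 < q.toReal := ENNReal.toReal_pos (by
        intro h; rw [h] at huq; exact hu0 (le_antisymm (le_of_le_of_eq huq rfl) (zero_le : (0:ℝ≥0∞) ≤ u)) ) hq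
      have hurqr : u.toReal ≤ q.toReal := ENNReal.toReal_mono hq huq
      have h1 : ‖inclLp huq y‖ ^ q.toReal ≤ 1 := by
        rw [lp.norm_rpow_eq_tsum hqr]
        have hle : ∀ j, ‖(inclLp huq y : ℕ → ℂ) j‖ ^ q.toReal ≤ ‖y j‖ ^ u.toReal := by
          intro j
          rw [inclLp_apply]
          rcases eq_or_lt_of_le (norm_nonneg (y j)) with h0 | h0
          · rw [← h0, Real.zero_rpow hqr.ne', Real.zero_rpow hur.ne']
          · exact Real.rpow_le_rpow_of_exponent_ge h0 (hyj j) hurqr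
        have hsum : (∑' j, ‖(inclLp huq y : ℕ → ℂ) j‖ ^ q.toReal)
            ≤ ∑' j, ‖y j‖ ^ u.toReal :=
          Summable.tsum_le_tsum hle ((lp.memℓp _).summable hqr) ((lp.memℓp y).summable hur)
        refine hsum.trans ?_
        rw [← lp.norm_rpow_eq_tsum hur y]
        exact Real.rpow_le_one (norm_nonneg _) hy hur.le
      calc ‖inclLp huq y‖ = (‖inclLp huq y‖ ^ q.toReal) ^ (1 / q.toReal) := by
            rw [← Real.rpow_mul (norm_nonneg _), mul_one_div_cancel hqr.ne', Real.rpow_one]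
        _ ≤ 1 := by
            have h2 := Real.rpow_le_rpow (Real.rpow_nonneg (norm_nonneg _) _) h1
              (le_of_lt (by positivity : (0:ℝ) < 1 / q.toReal))
            simpa using h2
  -- scaling
  by_cases hx : x = 0
  · subst hx
    have : inclLp huq 0 = 0 := by
      apply lp.ext
      rfl
    rw [this]
    simp
  · have hnx : 0 < ‖x‖ := norm_pos_iff.2 hx
    set y := ((‖x‖⁻¹ : ℝ) : ℂ) • x with hy
    have hny : ‖y‖ ≤ 1 := by
      rw [hy, norm_smul]
      simp [norm_inv, abs_of_pos hnx, inv_mul_cancel₀ hnx.ne']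
    have hincl : inclLp huq x = ((‖x‖ : ℝ) : ℂ) • inclLp huq y := by
      apply lp.ext
      rw [lp.coeFn_smul]
      funext j
      rw [Pi.smul_apply, inclLp_apply, inclLp_apply, hy, lp.coeFn_smul, Pi.smul_apply]
      rw [smul_smul]
      rw [← Complex.ofReal_mul, mul_inv_cancel₀ hnx.ne']
      simp
    rw [hincl, norm_smul]
    calc ‖((‖x‖ : ℝ) : ℂ)‖ * ‖inclLp huq y‖ ≤ ‖x‖ * 1 := by
          apply mul_le_mul _ (claim y hny) (norm_nonneg _) (norm_nonneg _)
          simp [abs_of_pos hnx]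
      _ = ‖x‖ := mul_one _

variable {m : ℕ}

noncomputable def subVec (m : ℕ) (α : {α : ℕ →₀ ℕ // (α : ℕ →₀ ℕ).sum (fun _ k => k) = m}) :
    List.Vector ℕ m :=
  ⟨(Finsupp.toMultiset (α : ℕ →₀ ℕ)).toList, by
    rw [Multiset.length_toList, Finsupp.card_toMultiset]
    exact α.2⟩

lemma subVec_count (α : {α : ℕ →₀ ℕ // (α : ℕ →₀ ℕ).sum (fun _ k => k) = m}) (i : ℕ) :
    (α : ℕ →₀ ℕ) i = (Finset.univ.filter fun j => (subVec m α).get j = i).card := by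
  rw [Fin.card_filter_univ_eq_vector_get_eq_count]
  show (α : ℕ →₀ ℕ) i = ((Finsupp.toMultiset (α : ℕ →₀ ℕ)).toList).count i
  rw [← Multiset.coe_count, Multiset.coe_toList, Finsupp.count_toMultiset]

lemma subVec_inj : Function.Injective
    (fun α : {α : ℕ →₀ ℕ // (α : ℕ →₀ ℕ).sum (fun _ k => k) = m} => (subVec m α).get) := by
  intro α β h
  apply Subtype.ext
  ext i
  simp only at h
  rw [subVec_count α i, subVec_count β i, h]

lemma key1 {m : ℕ} (hm : 0 < m) (p u : ℝ≥0∞) [Fact (1 ≤ p)] [Fact (1 ≤ u)]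
    (hu2 : 2 ≤ u.toReal)
    (T : ContinuousMultilinearMap ℂ (fun _ : Fin m => lp (fun _ : ℕ => ℂ) p)
      (lp (fun _ : ℕ => ℂ) u))
    (hT : ∀ (σ : Equiv.Perm (Fin m)) (x : Fin m → lp (fun _ : ℕ => ℂ) p),
      T (fun j => x (σ j)) = T x)
    (S₀ : ℝ) (hS₀ : ∀ z : lp (fun _ : ℕ => ℂ) p, ‖z‖ ≤ 1 → ‖T (fun _ => z)‖ ≤ S₀)
    (F : Finset ℕ) (lam : ℕ → ℝ) (hlam0 : ∀ i, 0 ≤ lam i)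
    (hadm : ∀ w : {i // i ∈ F} → ℂ, (∀ i, ‖w i‖ ≤ lam ↑i) →
      ‖∑ i : {i // i ∈ F}, lp.single (E := fun _ : ℕ => ℂ) p (↑i : ℕ) (w i)‖ ≤ 1) :
    ∑ g : Fin m → {i // i ∈ F}, (∏ k, lam ↑(g k)) ^ u.toReal *
        ‖T (fun k => lp.single p (↑(g k) : ℕ) (1:ℂ))‖ ^ u.toReal
      ≤ ((m:ℝ) ^ m / m.factorial * S₀) ^ u.toReal := by
  classical
  set ur := u.toReal with hurdef
  have hur0 : 0 < ur := lt_of_lt_of_le two_pos hu2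
  have hS0nn : 0 ≤ S₀ := le_trans (norm_nonneg _) (hS₀ 0 (by simp))
  set ι := {i // i ∈ F}
  set N := m * Fintype.card ι with hN
  set B := (m:ℝ) ^ m / m.factorial * S₀ with hB
  have hB0 : 0 ≤ B := by positivity
  set v : (Fin m → ι) → lp (fun _ : ℕ => ℂ) u :=
    fun g => T (fun k => lp.single p (↑(g k) : ℕ) (1:ℂ)) with hv
  set Λ : (Fin m → ι) → ℝ := fun g => ∏ k, lam ↑(g k) with hΛ
  have hΛ0 : ∀ g, 0 ≤ Λ g := fun g => Finset.prod_nonneg fun k _ => hlam0 _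
  set xv : (Fin m × ι → Bool) → Fin m → lp (fun _ : ℕ => ℂ) p :=
    fun ε k => ∑ i : ι, lp.single (E := fun _ : ℕ => ℂ) p (↑i : ℕ) ((sgn (ε (k, i)) * ((lam ↑i : ℝ) : ℂ))) with hxvdef
  have hxv : ∀ ε k, ‖xv ε k‖ ≤ 1 := by
    intro ε k
    apply hadm
    intro i
    rw [norm_mul, sgn_norm, one_mul, Complex.norm_real, Real.norm_eq_abs,
      abs_of_nonneg (hlam0 _)]
  -- bound on each ‖T (xv ε)‖
  have hTxv : ∀ ε, ‖T (xv ε)‖ ≤ B := by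
    intro ε
    have hpol := polarization m T hT (xv ε)
    have hterm : ∀ δ : Fin m → Bool, ‖T (fun _ => ∑ k, sgn (δ k) • xv ε k)‖
        ≤ (m:ℝ) ^ m * S₀ := by
      intro δ
      set y := ∑ k, sgn (δ k) • xv ε k with hy
      have hny : ‖y‖ ≤ m := by
        calc ‖y‖ ≤ ∑ k, ‖sgn (δ k) • xv ε k‖ := norm_sum_le _ _
          _ ≤ ∑ _k : Fin m, (1:ℝ) := by
              refine Finset.sum_le_sum fun k _ => ?_
              rw [norm_smul, sgn_norm, one_mul]
              exact hxv ε k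
          _ = m := by simp
      set z := (((m:ℝ)⁻¹ : ℝ) : ℂ) • y with hz
      have hnz : ‖z‖ ≤ 1 := by
        rw [hz, norm_smul, Complex.norm_real, Real.norm_eq_abs, abs_of_nonneg
          (by positivity)]
        rw [inv_mul_le_iff₀ (by exact_mod_cast hm), mul_one]
        exact hny
      have hyz : y = ((m:ℕ) : ℂ) • z := by
        rw [hz, smul_smul]
        rw [show ((m:ℕ) : ℂ) * (((m:ℝ)⁻¹ : ℝ) : ℂ) = 1 by
          push_cast
          rw [mul_inv_cancel₀]
          exact_mod_cast hm.ne']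
        rw [one_smul]
      have hmap : T (fun _ => y) = (((m:ℕ) : ℂ) ^ m) • T (fun _ => z) := by
        rw [hyz]
        have := T.map_smul_univ (fun _ : Fin m => ((m:ℕ) : ℂ)) (fun _ => z)
        rw [this]
        simp
      rw [hmap, norm_smul, norm_pow, Complex.norm_natCast]
      have := hS₀ z hnz
      have hmm : (0:ℝ) ≤ (m:ℝ) ^ m := by positivity
      calc ((m:ℝ)) ^ m * ‖T fun _ => z‖ ≤ (m:ℝ) ^ m * S₀ :=
        mul_le_mul_of_nonneg_left this hmm
        _ = (m:ℝ) ^ m * S₀ := rfl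
    have hsum : ∑ δ : Fin m → Bool, ‖T (fun _ => ∑ k, sgn (δ k) • xv ε k)‖
        ≤ (2:ℝ) ^ m * ((m:ℝ) ^ m * S₀) := by
      calc ∑ δ : Fin m → Bool, ‖T (fun _ => ∑ k, sgn (δ k) • xv ε k)‖
          ≤ ∑ _δ : Fin m → Bool, (m:ℝ) ^ m * S₀ := Finset.sum_le_sum fun δ _ => hterm δ
        _ = (2:ℝ) ^ m * ((m:ℝ) ^ m * S₀) := by
            rw [Finset.sum_const, Finset.card_univ]
            rw [show Fintype.card (Fin m → Bool) = 2 ^ m by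
              rw [Fintype.card_fun, Fintype.card_bool, Fintype.card_fin]]
            rw [nsmul_eq_mul]
            push_cast
            ring
    have h2m : (0:ℝ) < (2:ℝ) ^ m * m.factorial := by positivity
    rw [hB]
    calc ‖T (xv ε)‖ ≤ (2:ℝ) ^ m * ((m:ℝ) ^ m * S₀) / ((2:ℝ) ^ m * m.factorial) := by
          rw [le_div_iff₀' h2m]
          exact le_trans hpol hsum
      _ = (m:ℝ) ^ m / m.factorial * S₀ := by
          field_simp
  -- expansion of T (xv ε)
  have h_expand : ∀ ε : Fin m × ι → Bool, T (xv ε)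
      = ∑ g : Fin m → ι, ((∏ k, sgn (ε (k, g k))) * ((Λ g : ℝ) : ℂ)) • v g := by
    intro ε
    refine (T.map_sum (fun (k : Fin m) (i : ι) =>
      lp.single (E := fun _ : ℕ => ℂ) p (↑i : ℕ) ((sgn (ε (k, i)) * ((lam ↑i : ℝ) : ℂ))))).trans
      (Finset.sum_congr rfl fun g _ => ?_)
    have hone : (fun k => lp.single (E := fun _ : ℕ => ℂ) p (↑(g k) : ℕ)
          ((sgn (ε (k, g k)) * ((lam ↑(g k) : ℝ) : ℂ))))
        = fun k => (sgn (ε (k, g k)) * ((lam ↑(g k) : ℝ) : ℂ)) •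
            lp.single (E := fun _ : ℕ => ℂ) p (↑(g k) : ℕ) (1:ℂ) := by
      funext k
      rw [← lp.single_smul, smul_eq_mul, mul_one]
    rw [hone, T.map_smul_univ]
    congr 1
    rw [Finset.prod_mul_distrib]
    congr 1
    rw [hΛ]
    norm_cast
  have h_coord : ∀ (ε : Fin m × ι → Bool) (j : ℕ),
      (T (xv ε) : ℕ → ℂ) j = ∑ g : Fin m → ι, (∏ k, sgn (ε (k, g k))) *
        (((Λ g : ℝ) : ℂ) * (v g : ℕ → ℂ) j) := by
    intro ε j
    rw [h_expand ε, lp.coeFn_sum, Finset.sum_apply]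
    refine Finset.sum_congr rfl fun g _ => ?_
    rw [lp.coeFn_smul, Pi.smul_apply, smul_eq_mul, mul_assoc]
  have h2N : (0:ℝ) < (2:ℝ) ^ N := by positivity
  have hcardε : Fintype.card (Fin m × ι → Bool) = 2 ^ N := by
    rw [Fintype.card_fun, Fintype.card_bool, Fintype.card_prod, Fintype.card_fin]
  have EQj : ∀ j : ℕ, ∑ g : Fin m → ι, ‖((Λ g : ℝ) : ℂ) * (v g : ℕ → ℂ) j‖ ^ 2
      = ((2:ℝ) ^ N)⁻¹ * ∑ ε : Fin m × ι → Bool, ‖(T (xv ε) : ℕ → ℂ) j‖ ^ 2 := by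
    intro j
    have h := rademacher_norm_sq (b := fun g : Fin m → ι => ((Λ g : ℝ) : ℂ) * (v g : ℕ → ℂ) j)
    simp only [h_coord]
    rw [← h, inv_mul_cancel_left₀ h2N.ne']
  have hpow : ∀ x : ℝ, 0 ≤ x → x ^ ur = (x ^ 2) ^ (ur / 2) := by
    intro x hx
    rw [← Real.rpow_natCast x 2, ← Real.rpow_mul hx]
    congr 1
    push_cast
    ring
  have hb : ∀ (j : ℕ) (g : Fin m → ι), ‖((Λ g : ℝ) : ℂ) * (v g : ℕ → ℂ) j‖
      = Λ g * ‖(v g : ℕ → ℂ) j‖ := by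
    intro j g
    rw [norm_mul, Complex.norm_real, Real.norm_eq_abs, abs_of_nonneg (hΛ0 g)]
  have hur2 : 1 ≤ ur / 2 := by linarith
  have pw : ∀ j : ℕ, ∑ g : Fin m → ι, Λ g ^ ur * ‖(v g : ℕ → ℂ) j‖ ^ ur
      ≤ ((2:ℝ) ^ N)⁻¹ * ∑ ε : Fin m × ι → Bool, ‖(T (xv ε) : ℕ → ℂ) j‖ ^ ur := by
    intro j
    have e1 : ∀ g : Fin m → ι, Λ g ^ ur * ‖(v g : ℕ → ℂ) j‖ ^ ur
        = (‖((Λ g : ℝ) : ℂ) * (v g : ℕ → ℂ) j‖ ^ 2) ^ (ur/2) := by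
      intro g
      rw [← Real.mul_rpow (hΛ0 g) (norm_nonneg _), ← hb j g,
        hpow _ (norm_nonneg _)]
    calc ∑ g : Fin m → ι, Λ g ^ ur * ‖(v g : ℕ → ℂ) j‖ ^ ur
        = ∑ g : Fin m → ι, (‖((Λ g : ℝ) : ℂ) * (v g : ℕ → ℂ) j‖ ^ 2) ^ (ur/2) :=
          Finset.sum_congr rfl fun g _ => e1 g
      _ ≤ (∑ g : Fin m → ι, ‖((Λ g : ℝ) : ℂ) * (v g : ℕ → ℂ) j‖ ^ 2) ^ (ur/2) :=
          sum_rpow_le_rpow_sum _ _ (fun g _ => by positivity) hur2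
      _ = (((2:ℝ) ^ N)⁻¹ * ∑ ε : Fin m × ι → Bool, ‖(T (xv ε) : ℕ → ℂ) j‖ ^ 2) ^ (ur/2) := by
          rw [EQj j]
      _ ≤ ((2:ℝ) ^ N)⁻¹ * ∑ ε : Fin m × ι → Bool, ‖(T (xv ε) : ℕ → ℂ) j‖ ^ ur := by
          have hjen := Real.rpow_arith_mean_le_arith_mean_rpow Finset.univ
            (fun _ : Fin m × ι → Bool => ((2:ℝ) ^ N)⁻¹)
            (fun ε : Fin m × ι → Bool => ‖(T (xv ε) : ℕ → ℂ) j‖ ^ 2)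
            (fun ε _ => by positivity)
            (by
              rw [Finset.sum_const, Finset.card_univ, hcardε, nsmul_eq_mul]
              push_cast
              field_simp)
            (fun ε _ => by positivity) hur2
          rw [← Finset.mul_sum] at hjen
          refine hjen.trans ?_
          rw [← Finset.mul_sum]
          refine mul_le_mul_of_nonneg_left ?_ (by positivity)
          refine Finset.sum_le_sum fun ε _ => ?_
          rw [hpow _ (norm_nonneg _)]
      _ = ((2:ℝ) ^ N)⁻¹ * ∑ ε : Fin m × ι → Bool, ‖(T (xv ε) : ℕ → ℂ) j‖ ^ ur := rfl
  -- summability facts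
  have hs1 : ∀ g : Fin m → ι, Summable (fun j : ℕ => ‖(v g : ℕ → ℂ) j‖ ^ ur) :=
    fun g => (lp.memℓp (v g)).summable hur0
  have hs1' : ∀ g : Fin m → ι, Summable (fun j : ℕ => Λ g ^ ur * ‖(v g : ℕ → ℂ) j‖ ^ ur) :=
    fun g => (hs1 g).mul_left _
  have hs2 : ∀ ε : Fin m × ι → Bool, Summable (fun j : ℕ => ‖(T (xv ε) : ℕ → ℂ) j‖ ^ ur) :=
    fun ε => (lp.memℓp (T (xv ε))).summable hur0
  calc ∑ g : Fin m → ι, Λ g ^ ur * ‖v g‖ ^ ur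
      = ∑ g : Fin m → ι, ∑' j : ℕ, Λ g ^ ur * ‖(v g : ℕ → ℂ) j‖ ^ ur := by
        refine Finset.sum_congr rfl fun g _ => ?_
        rw [tsum_mul_left, ← lp.norm_rpow_eq_tsum hur0 (v g)]
    _ = ∑' j : ℕ, ∑ g : Fin m → ι, Λ g ^ ur * ‖(v g : ℕ → ℂ) j‖ ^ ur :=
        (Summable.tsum_finsetSum (fun g _ => hs1' g)).symm
    _ ≤ ∑' j : ℕ, ((2:ℝ) ^ N)⁻¹ * ∑ ε : Fin m × ι → Bool, ‖(T (xv ε) : ℕ → ℂ) j‖ ^ ur := by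
        refine Summable.tsum_le_tsum pw (summable_sum (fun g _ => hs1' g)) ?_
        exact ((summable_sum (fun ε (_ : ε ∈ Finset.univ) => hs2 ε))).mul_left _
    _ = ((2:ℝ) ^ N)⁻¹ * ∑ ε : Fin m × ι → Bool, ∑' j : ℕ, ‖(T (xv ε) : ℕ → ℂ) j‖ ^ ur := by
        rw [tsum_mul_left, Summable.tsum_finsetSum (fun ε _ => hs2 ε)]
    _ = ((2:ℝ) ^ N)⁻¹ * ∑ ε : Fin m × ι → Bool, ‖T (xv ε)‖ ^ ur := by
        rw [Finset.sum_congr rfl fun ε _ => (lp.norm_rpow_eq_tsum hur0 (T (xv ε))).symm]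
    _ ≤ ((2:ℝ) ^ N)⁻¹ * ∑ _ε : Fin m × ι → Bool, B ^ ur := by
        refine mul_le_mul_of_nonneg_left ?_ (by positivity)
        exact Finset.sum_le_sum fun ε _ =>
          Real.rpow_le_rpow (norm_nonneg _) (hTxv ε) hur0.le
    _ = B ^ ur := by
        rw [Finset.sum_const, Finset.card_univ, hcardε, nsmul_eq_mul]
        push_cast
        field_simp

lemma sum_single_subtype (p : ℝ≥0∞) [Fact (1 ≤ p)] (F : Finset ℕ) (w : {i // i ∈ F} → ℂ) :
    ∑ i : {i // i ∈ F}, lp.single (E := fun _ : ℕ => ℂ) p (↑i : ℕ) (w i)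
      = ∑ i ∈ F, lp.single (E := fun _ : ℕ => ℂ) p i
          (if h : i ∈ F then w ⟨i, h⟩ else 0) := by
  rw [← Finset.sum_attach F (fun i => lp.single (E := fun _ : ℕ => ℂ) p i
    (if h : i ∈ F then w ⟨i, h⟩ else 0)), Finset.univ_eq_attach]
  refine Finset.sum_congr rfl fun i _ => ?_
  congr 1
  rw [dif_pos i.2]

lemma coord_sum_single (p : ℝ≥0∞) [Fact (1 ≤ p)] (F : Finset ℕ) (w : {i // i ∈ F} → ℂ)
    (j : ℕ) :
    (∑ i : {i // i ∈ F}, lp.single (E := fun _ : ℕ => ℂ) p (↑i : ℕ) (w i)) j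
      = if h : j ∈ F then w ⟨j, h⟩ else 0 := by
  simp only [lp.coeFn_sum, Finset.sum_apply]
  by_cases h : j ∈ F
  · rw [dif_pos h]
    rw [Finset.sum_eq_single (⟨j, h⟩ : {i // i ∈ F})]
    · exact lp.single_apply_self (E := fun _ : ℕ => ℂ) p j (w ⟨j, h⟩)
    · intro i _ hi
      refine lp.single_apply_ne (E := fun _ : ℕ => ℂ) p _ _ (fun hj => hi ?_)
      exact Subtype.ext hj.symm
    · intro hmem
      exact absurd (Finset.mem_univ _) hmem
  · rw [dif_neg h]
    exact Finset.sum_eq_zero fun i _ =>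
      lp.single_apply_ne (E := fun _ : ℕ => ℂ) p _ _ (fun hj => h (hj ▸ i.2))

lemma le_one_of_rpow_le_one {x t : ℝ} (hx : 0 ≤ x) (ht : 0 < t) (h : x ^ t ≤ 1) : x ≤ 1 := by
  have h2 := Real.rpow_le_rpow (Real.rpow_nonneg hx _) h
    (le_of_lt (by positivity : (0:ℝ) < 1 / t))
  rw [← Real.rpow_mul hx, mul_one_div_cancel ht.ne', Real.rpow_one] at h2
  simpa using h2

set_option maxHeartbeats 2000000 in
/-- for `2 ≤ u ≤ q ≤ ∞` and `mu < p` (so also `m < p`), with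
`1/ρ = 1/u - m/p`, every continuous `m`-homogeneous polynomial `P : ℓ_p → ℓ_u`
(represented by its unique symmetric `m`-linear map `T`, with coefficients
`c_α = (m!/α!) T(e₁^{α₁},…)` and `‖P‖ = sup_{‖x‖≤1} ‖T(x,…,x)‖`) satisfies
`(∑_{α ∈ Λ_m} ‖c_α‖_{ℓ_q}^ρ)^{1/ρ} ≤ C‖P‖`. -/
theorem stmt18 (m : ℕ) (hm : 0 < m) (p u q : ℝ≥0∞)
    [Fact (1 ≤ p)] [Fact (1 ≤ u)] [Fact (1 ≤ q)]
    (hu : (2 : ℝ≥0∞) ≤ u) (huq : u ≤ q)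
    (hmp : (m : ℝ≥0∞) < p) (hmup : (m : ℝ≥0∞) * u < p)
    (rho : ℝ) (hrho : rho = ((u.toReal)⁻¹ - m * (p.toReal)⁻¹)⁻¹) :
    ∃ C > (0 : ℝ),
      ∀ T : ContinuousMultilinearMap ℂ (fun _ : Fin m => lp (fun _ : ℕ => ℂ) p)
          (lp (fun _ : ℕ => ℂ) u),
        (∀ (σ : Equiv.Perm (Fin m)) (x : Fin m → lp (fun _ : ℕ => ℂ) p),
          T (fun j => x (σ j)) = T x) →
        ∀ c : {α : ℕ →₀ ℕ // (α : ℕ →₀ ℕ).sum (fun _ k => k) = m} →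
            lp (fun _ : ℕ => ℂ) u,
          (∀ (α : {α : ℕ →₀ ℕ // (α : ℕ →₀ ℕ).sum (fun _ k => k) = m}) (f : Fin m → ℕ),
            (∀ i : ℕ, (α : ℕ →₀ ℕ) i = (Finset.univ.filter fun j => f j = i).card) →
            c α = ((m.factorial : ℂ) /
                ((α : ℕ →₀ ℕ).prod fun _ k => (k.factorial : ℂ))) •
              T (fun j => lp.single p (f j) 1)) →
          Summable (fun α : {α : ℕ →₀ ℕ // (α : ℕ →₀ ℕ).sum (fun _ k => k) = m} =>
            ‖inclLp huq (c α)‖ ^ rho) ∧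
          (∑' α : {α : ℕ →₀ ℕ // (α : ℕ →₀ ℕ).sum (fun _ k => k) = m},
              ‖inclLp huq (c α)‖ ^ rho) ^ (1 / rho) ≤
            C * ⨆ x : {x : lp (fun _ : ℕ => ℂ) p // ‖x‖ ≤ 1},
              ‖T fun _ => (x : lp (fun _ : ℕ => ℂ) p)‖ := by
  classical
  have hmR : (0:ℝ) < (m:ℝ) := by exact_mod_cast hm
  have hu_ne : u ≠ ∞ := by
    intro h
    rw [h, ENNReal.mul_top (by exact_mod_cast hm.ne' : (m : ℝ≥0∞) ≠ 0)] at hmup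
    exact not_top_lt hmup
  set ur := u.toReal with hurdef
  have hur2 : (2:ℝ) ≤ ur := by
    have := (ENNReal.toReal_le_toReal (by norm_num) hu_ne).2 hu
    simpa using this
  have hur0 : (0:ℝ) < ur := by linarith
  -- facts about rho, by cases on p
  have hrho_pos : 0 < rho := by
    by_cases hp : p = ∞
    · rw [hrho, hp]
      simp only [ENNReal.toReal_top, inv_zero, mul_zero, sub_zero, inv_inv]
      exact hur0
    · have hp0 : p ≠ 0 := by
        intro h0
        rw [h0] at hmp
        exact absurd hmp (by simp)
      have hpr0 : 0 < p.toReal := ENNReal.toReal_pos hp0 hp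
      have hmur : (m:ℝ) * ur < p.toReal := by
        have h1 : ((m:ℝ≥0∞) * u).toReal < p.toReal :=
          (ENNReal.toReal_lt_toReal (ENNReal.mul_ne_top (ENNReal.natCast_ne_top m) hu_ne) hp).2
            hmup
        rwa [ENNReal.toReal_mul, ENNReal.toReal_natCast] at h1
      have hD : 0 < ur⁻¹ - (m:ℝ) * (p.toReal)⁻¹ := by
        rw [sub_pos, show (m:ℝ) * (p.toReal)⁻¹ = m / p.toReal from (div_eq_mul_inv _ _),
          show (ur)⁻¹ = 1/ur from (one_div _).symm]
        rw [div_lt_div_iff₀ hpr0 hur0]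
        linarith
      rw [hrho]
      exact inv_pos.2 hD
  refine ⟨(m:ℝ)^m, by positivity, ?_⟩
  intro T hsymT c hc
  set S₀ := ⨆ x : {x : lp (fun _ : ℕ => ℂ) p // ‖x‖ ≤ 1},
    ‖T fun _ => (x : lp (fun _ : ℕ => ℂ) p)‖ with hS₀def
  have hbdd : BddAbove (Set.range fun x : {x : lp (fun _ : ℕ => ℂ) p // ‖x‖ ≤ 1} =>
      ‖T fun _ => (x : lp (fun _ : ℕ => ℂ) p)‖) := by
    refine ⟨‖T‖, ?_⟩
    rintro _ ⟨x, rfl⟩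
    calc ‖T fun _ => (x : lp (fun _ : ℕ => ℂ) p)‖
        ≤ ‖T‖ * ∏ _k : Fin m, ‖(x : lp (fun _ : ℕ => ℂ) p)‖ := T.le_opNorm _
      _ ≤ ‖T‖ * 1 := mul_le_mul_of_nonneg_left
          (Finset.prod_le_one (fun _ _ => norm_nonneg _) (fun _ _ => x.2)) (norm_nonneg T)
      _ = ‖T‖ := mul_one _
  have hS₀ : ∀ z : lp (fun _ : ℕ => ℂ) p, ‖z‖ ≤ 1 → ‖T (fun _ => z)‖ ≤ S₀ :=
    fun z hz => le_ciSup hbdd ⟨z, hz⟩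
  have hS0nn : 0 ≤ S₀ := le_trans (norm_nonneg _) (hS₀ 0 (by simp))
  set a : (Fin m → ℕ) → ℝ :=
    fun g => ‖T fun k => lp.single (E := fun _ : ℕ => ℂ) p (g k) (1:ℂ)‖ with hadef
  have ha0 : ∀ g, 0 ≤ a g := fun g => norm_nonneg _
  have hasym : ∀ (σ : Equiv.Perm (Fin m)) (g : Fin m → ℕ), a (fun j => g (σ j)) = a g := by
    intro σ g
    have := hsymT σ (fun k => lp.single (E := fun _ : ℕ => ℂ) p (g k) (1:ℂ))
    simpa [hadef] using congrArg norm this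
  set B := (m:ℝ)^m / m.factorial * S₀ with hBdef
  have hB0 : 0 ≤ B := by positivity
  -- finite-set bound
  have SB : ∀ G : Finset (Fin m → ℕ), ∑ g ∈ G, a g ^ rho ≤ B ^ rho := by
    intro G
    set F : Finset ℕ := G.biUnion (fun g => Finset.image g Finset.univ) with hFdef
    have hmemF : ∀ g ∈ G, ∀ k, g k ∈ F := by
      intro g hg k
      exact Finset.mem_biUnion.2 ⟨g, hg, Finset.mem_image.2 ⟨k, Finset.mem_univ _, rfl⟩⟩
    set a' : (Fin m → {i // i ∈ F}) → ℝ := fun g' => a (fun k => ↑(g' k)) with ha'def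
    have step1 : ∑ g ∈ G, a g ^ rho ≤ ∑ g' : Fin m → {i // i ∈ F}, a' g' ^ rho := by
      set L : {g // g ∈ G} → (Fin m → {i // i ∈ F}) :=
        fun gh k => ⟨gh.1 k, hmemF gh.1 gh.2 k⟩ with hL
      have hLinj : Function.Injective L := by
        intro x y hxy
        apply Subtype.ext
        funext k
        exact congrArg Subtype.val (congrFun hxy k)
      have e1 : ∑ g ∈ G, a g ^ rho = ∑ gh ∈ G.attach, a' (L gh) ^ rho := by
        rw [← Finset.sum_attach G (fun g => a g ^ rho)]
      have e2 : ∑ gh ∈ G.attach, a' (L gh) ^ rho = ∑ g' ∈ G.attach.image L, a' g' ^ rho :=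
        (Finset.sum_image (f := fun g' => a' g' ^ rho) (g := L) (s := G.attach)
          (fun x _ y _ h => hLinj h)).symm
      rw [e1, e2]
      exact Finset.sum_le_sum_of_subset_of_nonneg (Finset.subset_univ _)
        (fun g' _ _ => Real.rpow_nonneg (ha0 _) _)
    have step2 : ∑ g' : Fin m → {i // i ∈ F}, a' g' ^ rho ≤ B ^ rho := by
      by_cases hp : p = ∞
      · have hrho_eq : rho = ur := by
          rw [hrho, hp]
          simp only [ENNReal.toReal_top, inv_zero, mul_zero, sub_zero, inv_inv]
        have hadm : ∀ w : {i // i ∈ F} → ℂ, (∀ i, ‖w i‖ ≤ (fun _ : ℕ => (1:ℝ)) ↑i) →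
            ‖∑ i : {i // i ∈ F}, lp.single (E := fun _ : ℕ => ℂ) p (↑i : ℕ) (w i)‖ ≤ 1 := by
          intro w hw
          subst hp
          rw [lp.norm_eq_ciSup]
          refine ciSup_le fun j => ?_
          rw [coord_sum_single]
          by_cases h : j ∈ F
          · rw [dif_pos h]
            exact hw ⟨j, h⟩
          · rw [dif_neg h]
            simp
        have hkey := key1 hm p u hur2 T hsymT S₀ hS₀ F (fun _ => 1)
          (fun _ => zero_le_one) hadm
        simp only [Finset.prod_const, one_pow, Real.one_rpow, one_mul] at hkey
        rw [hrho_eq]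
        exact hkey
      · have hp0 : p ≠ 0 := by
          intro h0
          rw [h0] at hmp
          exact absurd hmp (by simp)
        have hpr0 : 0 < p.toReal := ENNReal.toReal_pos hp0 hp
        have hmur : (m:ℝ) * ur < p.toReal := by
          have h1 : ((m:ℝ≥0∞) * u).toReal < p.toReal :=
            (ENNReal.toReal_lt_toReal (ENNReal.mul_ne_top (ENNReal.natCast_ne_top m) hu_ne)
              hp).2 hmup
          rwa [ENNReal.toReal_mul, ENNReal.toReal_natCast] at h1
        have hD : 0 < ur⁻¹ - (m:ℝ) * (p.toReal)⁻¹ := by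
          rw [sub_pos, show (m:ℝ) * (p.toReal)⁻¹ = m / p.toReal from (div_eq_mul_inv _ _),
            show (ur)⁻¹ = 1/ur from (one_div _).symm]
          rw [div_lt_div_iff₀ hpr0 hur0]
          linarith
        have hrho_eq : 1 / rho = 1 / ur - m / p.toReal := by
          rw [hrho, one_div, inv_inv, one_div, div_eq_mul_inv]
        have hurrho : ur < rho := by
          have h2 : 0 < (m:ℝ) / p.toReal := by positivity
          have h1 : 1/rho < 1/ur := by
            rw [hrho_eq]
            linarith
          exact lt_of_one_div_lt_one_div hrho_pos h1
        refine weights_lemma hm a' (fun g' => ha0 _)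
          (fun σ g' => hasym σ fun k => ↑(g' k)) ur p.toReal B hur0 hpr0 hB0 rho
          hrho_eq hurrho ?_
        intro lam' hlam'0 hlam'sum
        set lam : ℕ → ℝ := fun i => if h : i ∈ F then lam' ⟨i, h⟩ else 0 with hlamdef
        have hlam0 : ∀ i, 0 ≤ lam i := by
          intro i
          rw [hlamdef]
          dsimp only
          split
          · exact hlam'0 _
          · exact le_refl 0
        have hlamcoe : ∀ i : {i // i ∈ F}, lam ↑i = lam' i := by
          intro i
          rw [hlamdef]
          dsimp only
          rw [dif_pos i.2]
        have hadm : ∀ w : {i // i ∈ F} → ℂ, (∀ i, ‖w i‖ ≤ lam ↑i) →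
            ‖∑ i : {i // i ∈ F}, lp.single (E := fun _ : ℕ => ℂ) p (↑i : ℕ) (w i)‖ ≤ 1 := by
          intro w hw
          rw [sum_single_subtype]
          have hn := lp.norm_sum_single (E := fun _ : ℕ => ℂ) hpr0
            (fun i => if h : i ∈ F then w ⟨i, h⟩ else 0) F
          refine le_one_of_rpow_le_one (norm_nonneg _) hpr0 ?_
          rw [hn]
          calc ∑ i ∈ F, ‖if h : i ∈ F then w ⟨i, h⟩ else 0‖ ^ p.toReal
              ≤ ∑ i ∈ F, lam i ^ p.toReal := by
                refine Finset.sum_le_sum fun i hi => ?_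
                refine Real.rpow_le_rpow (norm_nonneg _) ?_ hpr0.le
                rw [dif_pos hi]
                exact (hw ⟨i, hi⟩).trans_eq (by rw [hlamcoe ⟨i, hi⟩, ← hlamcoe ⟨i, hi⟩])
            _ = ∑ i : {i // i ∈ F}, lam' i ^ p.toReal := by
                rw [← Finset.sum_attach F (fun i => lam i ^ p.toReal), Finset.univ_eq_attach]
                exact Finset.sum_congr rfl fun i _ => by rw [hlamcoe i]
            _ ≤ 1 := hlam'sum
        have hkey := key1 hm p u hur2 T hsymT S₀ hS₀ F lam hlam0 hadm
        have hconv : ∀ g' : Fin m → {i // i ∈ F},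
            (∏ k, lam' (g' k)) = ∏ k, lam ↑(g' k) :=
          fun g' => Finset.prod_congr rfl fun k _ => (hlamcoe (g' k)).symm
        calc ∑ g' : Fin m → {i // i ∈ F}, (∏ k, lam' (g' k)) ^ ur * a' g' ^ ur
            = ∑ g' : Fin m → {i // i ∈ F}, (∏ k, lam ↑(g' k)) ^ ur * a' g' ^ ur :=
              Finset.sum_congr rfl fun g' _ => by rw [hconv g']
          _ ≤ B ^ ur := hkey
    exact le_trans step1 step2
  -- summability over all tuples
  have hSumTup : Summable (fun g : Fin m → ℕ => a g ^ rho) :=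
    summable_of_sum_le (fun g => Real.rpow_nonneg (ha0 g) _) SB
  -- coefficients
  have hrep : ∀ α : {α : ℕ →₀ ℕ // (α : ℕ →₀ ℕ).sum (fun _ k => k) = m},
      c α = ((m.factorial : ℂ) / ((α : ℕ →₀ ℕ).prod fun _ k => (k.factorial : ℂ))) •
        T (fun j => lp.single p ((subVec m α).get j) 1) :=
    fun α => hc α _ (subVec_count α)
  have hnormc : ∀ α, ‖c α‖ ≤ (m.factorial : ℝ) * a ((subVec m α).get) := by
    intro α
    rw [hrep α, norm_smul]
    have hcast : ((α : ℕ →₀ ℕ).prod fun _ k => (k.factorial : ℂ))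
        = (((α : ℕ →₀ ℕ).prod fun _ k => k.factorial : ℕ) : ℂ) := by
      rw [Finsupp.prod, Finsupp.prod, Nat.cast_prod]
    have h1 : 1 ≤ ((α : ℕ →₀ ℕ).prod fun _ k => k.factorial : ℕ) :=
      Finset.one_le_prod' fun i _ => Nat.one_le_iff_ne_zero.2 (Nat.factorial_pos _).ne'
    rw [hcast, norm_div, Complex.norm_natCast, Complex.norm_natCast]
    refine mul_le_mul_of_nonneg_right ?_ (ha0 _)
    exact div_le_self (by positivity) (by exact_mod_cast h1)
  set W : {α : ℕ →₀ ℕ // (α : ℕ →₀ ℕ).sum (fun _ k => k) = m} → ℝ :=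
    fun α => a ((subVec m α).get) ^ rho with hWdef
  have hWsum : Summable W := hSumTup.comp_injective subVec_inj
  have hbound : ∀ α, ‖inclLp huq (c α)‖ ^ rho ≤ (m.factorial : ℝ) ^ rho * W α := by
    intro α
    have h1 : ‖inclLp huq (c α)‖ ≤ (m.factorial:ℝ) * a ((subVec m α).get) :=
      (norm_inclLp_le huq hu_ne _).trans (hnormc α)
    calc ‖inclLp huq (c α)‖ ^ rho
        ≤ ((m.factorial:ℝ) * a ((subVec m α).get)) ^ rho :=
          Real.rpow_le_rpow (norm_nonneg _) h1 hrho_pos.le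
      _ = (m.factorial : ℝ) ^ rho * W α := by
          rw [Real.mul_rpow (by positivity) (ha0 _)]
  have hSummable : Summable (fun α => ‖inclLp huq (c α)‖ ^ rho) :=
    Summable.of_nonneg_of_le (fun α => Real.rpow_nonneg (norm_nonneg _) _) hbound
      (hWsum.mul_left _)
  refine ⟨hSummable, ?_⟩
  have htsumW : ∑' α, W α ≤ B ^ rho := by
    refine Summable.tsum_le_of_sum_le hWsum fun G => ?_
    have e : ∑ α ∈ G, W α = ∑ g ∈ G.image (fun α => (subVec m α).get), a g ^ rho :=
      (Finset.sum_image (f := fun g => a g ^ rho) (g := fun α => (subVec m α).get) (s := G)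
        (fun x _ y _ h => subVec_inj h)).symm
    rw [e]
    exact SB _
  have htotal : ∑' α, ‖inclLp huq (c α)‖ ^ rho ≤ ((m:ℝ)^m * S₀) ^ rho := by
    calc ∑' α, ‖inclLp huq (c α)‖ ^ rho ≤ ∑' α, (m.factorial : ℝ) ^ rho * W α :=
        Summable.tsum_le_tsum hbound hSummable (hWsum.mul_left _)
      _ = (m.factorial : ℝ) ^ rho * ∑' α, W α := tsum_mul_left
      _ ≤ (m.factorial : ℝ) ^ rho * B ^ rho :=
          mul_le_mul_of_nonneg_left htsumW (by positivity)
      _ = ((m.factorial : ℝ) * B) ^ rho := (Real.mul_rpow (by positivity) hB0).symm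
      _ = ((m:ℝ)^m * S₀) ^ rho := by
          rw [hBdef]
          congr 1
          field_simp
  calc (∑' α, ‖inclLp huq (c α)‖ ^ rho) ^ (1/rho)
      ≤ (((m:ℝ)^m * S₀)^rho)^(1/rho) :=
      Real.rpow_le_rpow (tsum_nonneg fun α => Real.rpow_nonneg (norm_nonneg _) _) htotal
        (by positivity)
    _ = (m:ℝ)^m * S₀ := by
        rw [← Real.rpow_mul (mul_nonneg (by positivity) hS0nn), mul_one_div_cancel
          hrho_pos.ne', Real.rpow_one]
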